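/- arXiv:1911.02368 — 5 statements merged into one kernel-verified Lean document; each statement's English description precedes it below -/
import Mathlib

section
/- Let A be a finite-dimensional central simple algebra over a field k, and let n = dim_k A. Then A ⊗_k A^op is isomorphic as a k-algebra to the matrix algebra M_n(k). -/
/-!
The map `a ⊗ b ↦ (x ↦ a * x * b)` from `A ⊗ Aᵐᵒᵖ` to `End_k A` is injective, hence by counting
dimensions bijective. Injectivity amounts to: if `b₁, …, bₘ` are linearly independent and
`∑ aⱼ x bⱼ = 0` for all `x`, then all `aⱼ` vanish. The families `a` satisfying this identity form
an `A`-`A` sub-bimodule of `Aᵐ`, so the values of its members at a fixed index form a two-sided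
ideal; by simplicity, if some `a_{j₀} ≠ 0` there is a member `w` with `w_{j₀} = 1`. The commutators
`y wⱼ - wⱼ y` again form a member, now vanishing at `j₀`, so by induction on `m` every `wⱼ` is
central, i.e. a scalar `λⱼ`. Taking `x = 1` gives `∑ λⱼ bⱼ = 0`, contradicting `λ_{j₀} = 1`.
-/

open TensorProduct

section SandwichKer

variable {k A ι : Type*} [Ring A]

def sandwichKer (b : ι → A) (s : Finset ι) : Submodule A (ι → A) where
  carrier := {a | ∀ x, ∑ j ∈ s, a j * x * b j = 0}
  zero_mem' x := by simp
  add_mem' {a a'} ha ha' x := by simp [add_mul, Finset.sum_add_distrib, ha x, ha' x]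
  smul_mem' y a ha x := by
    simpa [mul_assoc, ← Finset.mul_sum] using congr_arg (y * ·) (ha x)

variable {b : ι → A} {s : Finset ι} {a : ι → A}

theorem mul_right_mem_sandwichKer (ha : a ∈ sandwichKer b s) (v : A) :
    (fun j ↦ a j * v) ∈ sandwichKer b s := fun x ↦ by simpa [mul_assoc] using ha (v * x)

theorem commutator_mem_sandwichKer (ha : a ∈ sandwichKer b s) (y : A) :
    (fun j ↦ y * a j - a j * y) ∈ sandwichKer b s :=
  sub_mem ((sandwichKer b s).smul_mem y ha) (mul_right_mem_sandwichKer ha y)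

theorem mem_sandwichKer_erase [DecidableEq ι] {j : ι} (ha : a ∈ sandwichKer b s) (hj : a j = 0) :
    a ∈ sandwichKer b (s.erase j) := by
  intro x
  by_cases hjs : j ∈ s
  · simpa [← Finset.add_sum_erase s _ hjs, hj] using ha x
  · simpa [Finset.erase_eq_of_notMem hjs] using ha x

def sandwichKerEval (b : ι → A) (s : Finset ι) (j : ι) : TwoSidedIdeal A :=
  .mk' ((fun a : ι → A ↦ a j) '' sandwichKer b s)
    ⟨0, zero_mem _, rfl⟩
    (by rintro _ _ ⟨a, ha, rfl⟩ ⟨a', ha', rfl⟩; exact ⟨a + a', add_mem ha ha', rfl⟩)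
    (by rintro _ ⟨a, ha, rfl⟩; exact ⟨-a, neg_mem ha, rfl⟩)
    (by rintro y _ ⟨a, ha, rfl⟩; exact ⟨y • a, (sandwichKer b s).smul_mem y ha, rfl⟩)
    (by rintro _ v ⟨a, ha, rfl⟩; exact ⟨_, mul_right_mem_sandwichKer ha v, rfl⟩)

theorem exists_mem_sandwichKer_apply_eq_one [IsSimpleRing A] {j : ι}
    (ha : a ∈ sandwichKer b s) (hj : a j ≠ 0) : ∃ w ∈ sandwichKer b s, w j = 1 := by
  have hone := IsSimpleRing.one_mem_of_ne_zero_mem (sandwichKerEval b s j) hj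
    ((TwoSidedIdeal.mem_mk' ..).2 ⟨a, ha, rfl⟩)
  obtain ⟨w, hw, hwj⟩ := (TwoSidedIdeal.mem_mk' ..).1 hone
  exact ⟨w, hw, hwj⟩

variable [Field k] [Algebra k A] [Algebra.IsCentral k A] [IsSimpleRing A]

theorem eq_zero_of_mem_sandwichKer (hb : LinearIndependent k b) (s : Finset ι) :
    ∀ a ∈ sandwichKer b s, ∀ j ∈ s, a j = 0 := by
  classical
  induction s using Finset.strongInduction with
  | H s ih =>
  intro a ha j₀ hj₀
  by_contra haj₀
  obtain ⟨w, hw, hwj₀⟩ := exists_mem_sandwichKer_apply_eq_one ha haj₀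
  have hcentral : ∀ j ∈ s, w j ∈ Subalgebra.center k A := fun j hj ↦
    Subalgebra.mem_center_iff.2 fun y ↦ by
      obtain rfl | hj' := eq_or_ne j j₀
      · simp [hwj₀]
      · have hcomm := mem_sandwichKer_erase (j := j₀) (commutator_mem_sandwichKer hw y)
          (by simp [hwj₀])
        exact sub_eq_zero.1 <| ih _ (Finset.erase_ssubset hj₀) _ hcomm j
          (Finset.mem_erase.2 ⟨hj', hj⟩)
  choose! c hc using fun j hj ↦ (Algebra.IsCentral.mem_center_iff k).1 (hcentral j hj)
  have hsum : ∑ j ∈ s, c j • b j = 0 := by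
    rw [← hw 1]
    exact Finset.sum_congr rfl fun j hj ↦ by rw [hc j hj, mul_one, Algebra.smul_def]
  have hc₀ := linearIndependent_iff'.1 hb s c hsum j₀ hj₀
  exact one_ne_zero (hwj₀.symm.trans (by rw [hc j₀ hj₀, hc₀, map_zero]))

end SandwichKer

section CentralSimple

variable (k A : Type*) [Field k] [Ring A] [Algebra k A] [Algebra.IsCentral k A] [IsSimpleRing A]

theorem AlgHom.mulLeftRight_injective : Function.Injective (AlgHom.mulLeftRight k A) := by
  let b := Module.Basis.ofVectorSpace k A
  rw [injective_iff_map_eq_zero]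
  intro t ht
  obtain ⟨c, rfl⟩ := TensorProduct.eq_repr_basis_right b.mulOpposite t
  have hc : ⇑c ∈ sandwichKer b c.support := fun x ↦ by simpa [Finsupp.sum] using congr($ht x)
  suffices c = 0 by simp [this]
  ext i
  by_cases hi : i ∈ c.support
  · exact eq_zero_of_mem_sandwichKer b.linearIndependent _ _ hc i hi
  · exact Finsupp.notMem_support_iff.1 hi

instance IsAzumaya.of_isCentral_of_isSimpleRing [FiniteDimensional k A] : IsAzumaya k A where
  bij := by
    refine ⟨AlgHom.mulLeftRight_injective k A, ?_⟩
    have hdim : Module.finrank k (A ⊗[k] Aᵐᵒᵖ) = Module.finrank k (Module.End k A) := by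
      simp [Module.finrank_tensorProduct, Module.finrank_linearMap, MulOpposite.finrank]
    exact (LinearMap.injective_iff_surjective_of_finrank_eq_finrank hdim
      (f := (AlgHom.mulLeftRight k A).toLinearMap)).1 (AlgHom.mulLeftRight_injective k A)

end CentralSimple

/-- If `A` is a finite-dimensional central simple algebra over a field `k` with
`n = dim_k A`, then `A ⊗[k] Aᵐᵒᵖ ≅ M_n(k)` as `k`-algebras. -/
theorem csa_tensor_op_isomorphic_matrix
    (k : Type*) [Field k] (A : Type*) [Ring A] [Algebra k A]
    [FiniteDimensional k A] [Algebra.IsCentral k A] [IsSimpleRing A] :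
    Nonempty (A ⊗[k] Aᵐᵒᵖ ≃ₐ[k]
      Matrix (Fin (Module.finrank k A)) (Fin (Module.finrank k A)) k) :=
  ⟨(AlgEquiv.ofBijective _ (IsAzumaya.AlgHom.mulLeftRight_bij k A)).trans
    (algEquivMatrix (Module.finBasis k A))⟩
end

section
/- Let D be a finite-dimensional central division algebra over a field k and let L be a maximal subfield of D (a subfield containing k that is not properly contained in any larger subfield of D). Then C_D(L) = L, dim_k D = [L:k]², and D ⊗_k L is isomorphic as an L-algebra to the matrix algebra M_n(L) where n = [L:k]; in particular L is a splitting field of D. -/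
open TensorProduct

/-!
Let `D` act on itself by left multiplication and `L` by right multiplication through `f`; this
makes `D` an `L`-vector space `V` carrying an action of `L ⊗[k] D`, i.e. a map
`L ⊗[k] D →ₐ[L] End_L V`. It is injective because `D` is central (Artin's argument: a shortest
relation `∑ dᵢ x uᵢ = 0`, normalised to `dⱼ = 1`, yields by commutators a shorter one, so all `dᵢ`
are scalars). It is surjective by Jacobson density: `V` is a simple `L ⊗[k] D`-module whose
endomorphisms are right multiplications by `C_D(L)`, and `C_D(L) = L` by maximality, since any
`z ∈ C_D(L)` generates with `L` a commutative finite-dimensional subalgebra, which is a field.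
Counting `L`-dimensions gives `[L:k] · m = m²` for `m = dim_L V`, so `m = [L:k]`.
-/

theorem sum_commutator_mul_mul_eq_zero {R ι : Type*} [Ring R] (s : Finset ι) (d u : ι → R)
    (h : ∀ x, ∑ i ∈ s, d i * x * u i = 0) (x y : R) :
    ∑ i ∈ s, (d i * y - y * d i) * x * u i = 0 := by
  have hyx := h (y * x)
  have hx : y * ∑ i ∈ s, d i * x * u i = 0 := by rw [h x, mul_zero]
  rw [Finset.mul_sum] at hx
  calc ∑ i ∈ s, (d i * y - y * d i) * x * u i
      = ∑ i ∈ s, d i * (y * x) * u i - ∑ i ∈ s, y * (d i * x * u i) := by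
        rw [← Finset.sum_sub_distrib]
        exact Finset.sum_congr rfl fun i _ => by noncomm_ring
    _ = 0 := by rw [hyx, hx, sub_zero]

section

variable {k D : Type*} [Field k] [DivisionRing D] [Algebra k D]

theorem Algebra.IsCentral.eq_zero_of_forall_sum_mul_mul_eq_zero [Algebra.IsCentral k D]
    {ι : Type*} {u : ι → D} (hu : LinearIndependent k u) (s : Finset ι) (d : ι → D)
    (h : ∀ x, ∑ i ∈ s, d i * x * u i = 0) : ∀ i ∈ s, d i = 0 := by
  classical
  induction s using Finset.strongInduction generalizing d with
  | H s ih =>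
  by_contra! ⟨j, hjs, hj⟩
  set d' : ι → D := fun i => (d j)⁻¹ * d i
  have hd'j : d' j = 1 := inv_mul_cancel₀ hj
  have hd' : ∀ x, ∑ i ∈ s, d' i * x * u i = 0 := fun x => by
    simp only [d', mul_assoc, ← Finset.mul_sum]
    simp only [← mul_assoc, h, mul_zero]
  have hcomm : ∀ i ∈ s, ∀ y, d' i * y = y * d' i := by
    intro i hi y
    rcases eq_or_ne i j with rfl | hij
    · rw [hd'j, one_mul, mul_one]
    refine sub_eq_zero.mp (ih _ (Finset.erase_ssubset hjs) (fun i => d' i * y - y * d' i)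
      (fun x => ?_) i (Finset.mem_erase.mpr ⟨hij, hi⟩))
    have := sum_commutator_mul_mul_eq_zero s d' u hd' x y
    rwa [← Finset.add_sum_erase _ _ hjs, hd'j, one_mul, mul_one, sub_self, zero_mul, zero_mul,
      zero_add] at this
  have hscalar : ∀ i ∈ s, ∃ c : k, d' i = algebraMap k D c := fun i hi =>
    (Algebra.IsCentral.mem_center_iff k).mp
      (Subalgebra.mem_center_iff.mpr fun y => (hcomm i hi y).symm)
  choose! c hc using hscalar
  have hsum : ∑ i ∈ s, c i • u i = 0 := by
    rw [← hd' 1]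
    exact Finset.sum_congr rfl fun i hi => by rw [hc i hi, Algebra.smul_def, mul_one]
  have hcj := linearIndependent_iff'.mp hu s c hsum j hjs
  exact one_ne_zero (by rw [← hd'j, hc j hjs, hcj, map_zero] : (1 : D) = 0)

variable [FiniteDimensional k D]

open scoped IsMulCommutative in
theorem Algebra.isField_adjoin_of_mul_comm {s : Set D} (hs : ∀ a ∈ s, ∀ b ∈ s, a * b = b * a) :
    IsField (Algebra.adjoin k s) := by
  have := Algebra.isMulCommutative_adjoin k hs
  exact IsField.of_isDomain_of_finite k (Algebra.adjoin k s)

variable {L : Type*} [Field L] [Algebra k L]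

theorem AlgHom.centralizer_range_eq_range_of_maximal (f : L →ₐ[k] D)
    (hmax : ∀ L' : Subalgebra k D, IsField L' → f.range ≤ L' → L' = f.range) :
    Subalgebra.centralizer k (f.range : Set D) = f.range := by
  refine le_antisymm (fun z hz => ?_) fun x hx y hy => ?_
  · have hcomm : ∀ a ∈ insert z (f.range : Set D), ∀ b ∈ insert z (f.range : Set D),
        a * b = b * a := by
      rintro a (rfl | ⟨l, rfl⟩) b (rfl | ⟨l', rfl⟩)
      · rfl
      · exact (hz _ ⟨l', rfl⟩).symm
      · exact hz _ ⟨l, rfl⟩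
      · rw [← map_mul, mul_comm, map_mul]
    have hle : f.range ≤ Algebra.adjoin k (insert z (f.range : Set D)) :=
      (Set.subset_insert _ _).trans Algebra.subset_adjoin
    rw [← hmax _ (Algebra.isField_adjoin_of_mul_comm hcomm) hle]
    exact Algebra.subset_adjoin (Set.mem_insert _ _)
  · obtain ⟨l, rfl⟩ := hx
    obtain ⟨l', rfl⟩ := hy
    rw [← map_mul, mul_comm, map_mul]

end

section

variable {k D L : Type*} [Field k] [DivisionRing D] [Algebra k D] [Field L] [Algebra k L]

/-- `D` as an `L`-vector space by right multiplication through `f`; `D` still acts on the left. -/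
@[nolint unusedArguments]
def RightModuleVia (_f : L →ₐ[k] D) : Type _ := D

namespace RightModuleVia

variable (f : L →ₐ[k] D)

instance : AddCommGroup (RightModuleVia f) := inferInstanceAs (AddCommGroup D)
instance : Module k (RightModuleVia f) := inferInstanceAs (Module k D)
instance : Module D (RightModuleVia f) := inferInstanceAs (Module D D)
instance : Nontrivial (RightModuleVia f) := inferInstanceAs (Nontrivial D)

instance : Module L (RightModuleVia f) :=
  Module.compHom D ((f : L →+* D).toOpposite fun a b => (Commute.all a b).map f)

def equiv : RightModuleVia f ≃ₗ[D] D := LinearEquiv.refl D D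

variable {f}

theorem equiv_smul (l : L) (x : RightModuleVia f) : equiv f (l • x) = equiv f x * f l := rfl

instance : IsScalarTower k D (RightModuleVia f) := inferInstanceAs (IsScalarTower k D D)
instance : IsScalarTower k L (RightModuleVia f) := ⟨fun c l x => by
  show equiv f x * f (c • l) = c • (equiv f x * f l)
  rw [map_smul, mul_smul_comm]⟩
instance : SMulCommClass D L (RightModuleVia f) := ⟨fun d _ _ => (mul_assoc d _ _).symm⟩

instance [FiniteDimensional k D] : FiniteDimensional k (RightModuleVia f) :=
  inferInstanceAs (FiniteDimensional k D)

instance [FiniteDimensional k D] : FiniteDimensional L (RightModuleVia f) :=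
  FiniteDimensional.right k L _

variable (f) in
noncomputable def toEnd : L ⊗[k] D →ₐ[L] Module.End L (RightModuleVia f) :=
  AlgHom.liftEquiv k L D _ (Algebra.lsmul k L (RightModuleVia f))

theorem equiv_toEnd_tmul (l : L) (d : D) (x : RightModuleVia f) :
    equiv f (toEnd f (l ⊗ₜ d) x) = d * equiv f x * f l := rfl

theorem toEnd_injective [Algebra.IsCentral k D] : Function.Injective (toEnd f) := by
  classical
  refine (injective_iff_map_eq_zero _).mpr fun t ht => ?_
  let b := Module.Basis.ofVectorSpace k L
  obtain ⟨c, rfl⟩ := TensorProduct.eq_repr_basis_left b t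
  have hu : LinearIndependent k (f ∘ b) :=
    b.linearIndependent.map' f.toLinearMap (LinearMap.ker_eq_bot.mpr f.toRingHom.injective)
  have hrel : ∀ x : D, ∑ i ∈ c.support, c i * x * f (b i) = 0 := fun x => by
    simpa [Finsupp.sum, map_sum, equiv_toEnd_tmul] using
      congrArg (equiv f) (LinearMap.congr_fun ht ((equiv f).symm x))
  have hc := Algebra.IsCentral.eq_zero_of_forall_sum_mul_mul_eq_zero hu c.support c hrel
  rw [Finsupp.support_eq_empty.mp (Finset.eq_empty_of_forall_notMem fun i hi =>
    Finsupp.mem_support_iff.mp hi (hc i hi)), Finsupp.sum_zero_index]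

noncomputable instance : Module (L ⊗[k] D) (RightModuleVia f) :=
  Module.compHom _ (toEnd f : L ⊗[k] D →+* Module.End L (RightModuleVia f))

theorem smul_eq_toEnd (a : L ⊗[k] D) (x : RightModuleVia f) : a • x = toEnd f a x := rfl

theorem eq_tmul_smul_one (x : RightModuleVia f) :
    x = ((1 : L) ⊗ₜ[k] equiv f x) • (equiv f).symm 1 := by
  apply (equiv f).injective
  rw [smul_eq_toEnd, equiv_toEnd_tmul, LinearEquiv.apply_symm_apply, mul_one, map_one, mul_one]

instance : IsSimpleModule (L ⊗[k] D) (RightModuleVia f) := by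
  refine isSimpleModule_iff_toSpanSingleton_surjective.mpr ⟨?_, fun x hx y => ?_⟩
  · infer_instance
  · refine ⟨(1 : L) ⊗ₜ[k] (equiv f y * (equiv f x)⁻¹), (equiv f).injective ?_⟩
    rw [LinearMap.toSpanSingleton_apply, smul_eq_toEnd, equiv_toEnd_tmul, map_one f, mul_one,
      inv_mul_cancel_right₀ ((equiv f).map_ne_zero_iff.mpr hx)]

theorem exists_eq_smul_of_linearMap
    (hC : Subalgebra.centralizer k (f.range : Set D) = f.range)
    (h : RightModuleVia f →ₗ[L ⊗[k] D] RightModuleVia f) : ∃ l : L, ∀ x, h x = l • x := by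
  set one := (equiv f).symm 1
  have key : ∀ x, equiv f (h x) = equiv f x * equiv f (h one) := fun x =>
    calc equiv f (h x) = equiv f (h (((1 : L) ⊗ₜ[k] equiv f x) • one)) := by
          rw [← eq_tmul_smul_one]
      _ = equiv f x * equiv f (h one) := by
          rw [map_smul, smul_eq_toEnd, equiv_toEnd_tmul, map_one f, mul_one]
  have hmem : equiv f (h one) ∈ Subalgebra.centralizer k (f.range : Set D) := by
    rintro _ ⟨l, rfl⟩
    have := key ((l ⊗ₜ[k] (1 : D)) • one)
    rw [map_smul, smul_eq_toEnd, smul_eq_toEnd, equiv_toEnd_tmul, equiv_toEnd_tmul, one_mul,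
      one_mul, LinearEquiv.apply_symm_apply, one_mul] at this
    exact this.symm
  rw [hC] at hmem
  obtain ⟨l, hl⟩ := hmem
  exact ⟨l, fun x => (equiv f).injective (by rw [key, equiv_smul, ← hl]; rfl)⟩

theorem toEnd_surjective [FiniteDimensional k D]
    (hC : Subalgebra.centralizer k (f.range : Set D) = f.range) :
    Function.Surjective (toEnd f) := by
  classical
  intro g
  -- `g` commutes with every `L ⊗[k] D`-endomorphism, these being scalars from `L`
  let g' : Module.End (Module.End (L ⊗[k] D) (RightModuleVia f)) (RightModuleVia f) :=
    { toFun := g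
      map_add' := g.map_add
      map_smul' := fun h x => by
        obtain ⟨l, hl⟩ := exists_eq_smul_of_linearMap hC h
        simp only [Module.End.smul_def, hl, map_smul, RingHom.id_apply] }
  let b := Module.finBasis L (RightModuleVia f)
  obtain ⟨a, ha⟩ := jacobson_density g' (Finset.univ.image b)
  exact ⟨a, b.ext fun i => (ha (b i) (Finset.mem_image_of_mem b (Finset.mem_univ i))).symm⟩

theorem finrank_eq_of_toEnd_bijective [FiniteDimensional k D]
    (h : Function.Bijective (toEnd f)) :
    Module.finrank L (RightModuleVia f) = Module.finrank k L := by
  have htower : Module.finrank k L * Module.finrank L (RightModuleVia f) = Module.finrank k D :=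
    Module.finrank_mul_finrank k L (RightModuleVia f)
  have hsquare : Module.finrank L (RightModuleVia f) * Module.finrank L (RightModuleVia f) =
      Module.finrank k D := by
    rw [← Module.finrank_linearMap, ← (AlgEquiv.ofBijective _ h).toLinearEquiv.finrank_eq,
      Module.finrank_baseChange]
  exact (Nat.eq_of_mul_eq_mul_right Module.finrank_pos (htower.trans hsquare.symm)).symm

end RightModuleVia

end

open RightModuleVia in
/-- Let `D` be a finite-dimensional central division algebra over a field `k` and let
`L` be a maximal subfield of `D` (given by an embedding `f : L →ₐ[k] D` whose range is
maximal among subfields of `D`). Then `C_D(L) = L`, `dim_k D = [L:k]²`, and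
`L ⊗[k] D ≅ M_n(L)` as `L`-algebras with `n = [L:k]`; in particular `L` splits `D`. -/
theorem maximal_subfield_of_division_algebra
    (k : Type*) [Field k] (D : Type*) [DivisionRing D] [Algebra k D]
    [FiniteDimensional k D] [Algebra.IsCentral k D]
    (L : Type*) [Field L] [Algebra k L] (f : L →ₐ[k] D)
    (hmax : ∀ L' : Subalgebra k D, IsField L' → f.range ≤ L' → L' = f.range) :
    Subalgebra.centralizer k (f.range : Set D) = f.range ∧
    Module.finrank k D = Module.finrank k L ^ 2 ∧
    Nonempty (L ⊗[k] D ≃ₐ[L]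
      Matrix (Fin (Module.finrank k L)) (Fin (Module.finrank k L)) L) := by
  have hC := f.centralizer_range_eq_range_of_maximal hmax
  have hbij : Function.Bijective (toEnd f) := ⟨toEnd_injective, toEnd_surjective hC⟩
  have hm := finrank_eq_of_toEnd_bijective hbij
  refine ⟨hC, ?_, ⟨(AlgEquiv.ofBijective _ hbij).trans
    (algEquivMatrix (Module.finBasisOfFinrankEq L _ hm))⟩⟩
  change Module.finrank k (RightModuleVia f) = _
  rw [← Module.finrank_mul_finrank k L (RightModuleVia f), hm, sq]
end

section
/- (Frobenius) Every finite-dimensional associative unital division algebra D over the field ℝ of real numbers is isomorphic as an ℝ-algebra to ℝ, to ℂ, or to the quaternion algebra ℍ. -/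
/-!
A commutative subalgebra of `D` is a finite field extension of `ℝ`, hence `ℝ` or `ℂ`. So if `D`
is not commutative, a non-real element generates a copy of `ℂ`, giving `i` with `i² = -1`, and
anything commuting with `i` lies in `ℝ[i]`. Conjugation by `i` splits `D` into the centralizer
`ℝ[i]` and the elements anticommuting with `i`. A nonzero anticommuting `m` has `m²` real and
negative (otherwise `i` and `m` would both lie in the field `ℝ[m²]`), so rescaling `m` gives `j`
with `j² = -1` and `ij = -ji`; right multiplication by `j` maps the anticommuting part into
`ℝ[i]`. Hence `1, i, j, ij` span `D`, and the induced map `ℍ → D` is injective since `ℍ` is a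
division ring.
-/

open scoped Quaternion

open Module Algebra

theorem commute_mul_of_anticommute {R : Type*} [Ring R] {a b c : R} (hb : a * b = -(b * a))
    (hc : a * c = -(c * a)) : Commute a (b * c) := by
  rw [Commute, SemiconjBy, ← mul_assoc, hb, neg_mul, mul_assoc, hc, mul_neg, neg_neg, mul_assoc]

theorem exists_eq_add_commute_anticommute {A : Type*} [Ring A] [Algebra ℝ A] {i : A}
    (hi : i * i = -1) (y : A) :
    ∃ p m, y = p + m ∧ Commute i p ∧ i * m = -(m * i) := by
  have hii (z : A) : i * (i * z) = -z := by rw [← mul_assoc, hi, neg_one_mul]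
  refine ⟨(2⁻¹ : ℝ) • (y - i * y * i), (2⁻¹ : ℝ) • (y + i * y * i), ?_, ?_, ?_⟩
  · rw [← smul_add, sub_add_add_cancel, ← two_smul ℝ, smul_smul, inv_mul_cancel₀ two_ne_zero,
      one_smul]
  · refine Commute.smul_right ?_ _
    simp only [Commute, SemiconjBy, mul_sub, sub_mul, mul_assoc, hi, hii, mul_neg, mul_one,
      sub_neg_eq_add, add_comm]
  · simp only [mul_smul_comm, smul_mul_assoc, ← smul_neg, mul_add, add_mul, mul_assoc, hi, hii,
      mul_neg, mul_one, neg_add_rev, neg_neg]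

theorem notMem_bot_of_mul_self_eq_neg_one {A : Type*} [Ring A] [Algebra ℝ A] [Nontrivial A] {i : A}
    (hi : i * i = -1) : i ∉ (⊥ : Subalgebra ℝ A) := by
  rintro ⟨r, rfl⟩
  have : r * r = -1 := (algebraMap ℝ A).injective (by simpa using hi)
  nlinarith [mul_self_nonneg r]

def QuaternionAlgebra.Basis.ofAnticommute {R A : Type*} [CommRing R] [Ring A] [Algebra R A]
    {i j : A} (hi : i * i = -1) (hj : j * j = -1) (hij : i * j = -(j * i)) :
    QuaternionAlgebra.Basis A (-1 : R) 0 (-1) where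
  i := i
  j := j
  k := i * j
  i_mul_i := by rw [hi, zero_smul, add_zero, neg_one_smul]
  j_mul_j := by rw [hj, neg_one_smul]
  i_mul_j := rfl
  j_mul_i := by rw [hij, zero_smul, zero_sub, neg_neg]

section DivisionRing

variable {D : Type*} [DivisionRing D] [Algebra ℝ D]

theorem eq_zero_of_commute_of_mul_eq_neg {a b : D} (ha : a ≠ 0) (hc : Commute a b)
    (h : a * b = -(b * a)) : b = 0 := by
  have : CharZero D := charZero_of_injective_algebraMap (algebraMap ℝ D).injective
  rw [← hc.eq, CharZero.eq_neg_self_iff, mul_eq_zero] at h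
  exact h.resolve_left ha

theorem exists_smul_mul_self_eq_neg_one {y : D} (hy : y ∉ (⊥ : Subalgebra ℝ D))
    (hy2 : y * y ∈ (⊥ : Subalgebra ℝ D)) : ∃ c : ℝ, (c • y) * (c • y) = -1 := by
  obtain ⟨r, hr⟩ := Algebra.mem_bot.mp hy2
  have hneg : r < 0 := by
    by_contra! hr0
    have hs : y * y = algebraMap ℝ D √r * algebraMap ℝ D √r := by
      rw [← map_mul, Real.mul_self_sqrt hr0, hr]
    rcases (commute_algebraMap_right _ y).mul_self_eq_mul_self_iff.mp hs with h | h
    · exact hy (Algebra.mem_bot.mpr ⟨√r, h.symm⟩)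
    · exact hy (Algebra.mem_bot.mpr ⟨-√r, by rw [map_neg, h]⟩)
  refine ⟨(√(-r))⁻¹, ?_⟩
  rw [smul_mul_smul_comm, ← hr, Algebra.smul_def, ← map_mul, ← mul_inv,
    Real.mul_self_sqrt (neg_nonneg.mpr hneg.le), inv_mul_eq_div, div_neg_self hneg.ne, map_neg,
    map_one]

variable [FiniteDimensional ℝ D]

open scoped IsMulCommutative in
theorem Subalgebra.nonempty_algEquiv_real_or_complex (S : Subalgebra ℝ D) [IsMulCommutative S] :
    Nonempty (S ≃ₐ[ℝ] ℝ) ∨ Nonempty (S ≃ₐ[ℝ] ℂ) :=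
  letI : Field S := (isField_of_isIntegral_of_isField' (R := ℝ) (Semifield.toIsField ℝ)).toField
  Real.nonempty_algEquiv_or S

theorem Subalgebra.finrank_le_two (S : Subalgebra ℝ D) [IsMulCommutative S] :
    finrank ℝ S ≤ 2 := by
  rcases S.nonempty_algEquiv_real_or_complex with h | h <;> obtain ⟨e⟩ := h
  · simp [e.toLinearEquiv.finrank_eq]
  · simp [e.toLinearEquiv.finrank_eq, Complex.finrank_real_complex]

theorem Subalgebra.nonempty_algEquiv_complex_of_ne_bot (S : Subalgebra ℝ D) [IsMulCommutative S]
    (hS : S ≠ ⊥) : Nonempty (S ≃ₐ[ℝ] ℂ) := by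
  refine S.nonempty_algEquiv_real_or_complex.resolve_left fun ⟨e⟩ ↦ hS ?_
  rw [← Subalgebra.finrank_eq_one_iff, e.toLinearEquiv.finrank_eq, finrank_self]

theorem mem_adjoin_singleton_of_commute {w x : D} (hw : w ∉ (⊥ : Subalgebra ℝ D))
    (hx : Commute w x) : x ∈ adjoin ℝ {w} := by
  have : IsMulCommutative (adjoin ℝ {w, x}) := isMulCommutative_adjoin ℝ <| by
    rintro a (rfl | rfl) b (rfl | rfl) <;> first | rfl | exact hx | exact hx.symm
  have hle : adjoin ℝ {w} ≤ adjoin ℝ {w, x} := adjoin_mono (by simp)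
  have hw2 : finrank ℝ (adjoin ℝ {w}) = 2 := by
    have hne : adjoin ℝ {w} ≠ ⊥ := fun h ↦ hw (h ▸ self_mem_adjoin_singleton ℝ w)
    obtain ⟨e⟩ := (adjoin ℝ {w}).nonempty_algEquiv_complex_of_ne_bot hne
    rw [e.toLinearEquiv.finrank_eq, Complex.finrank_real_complex]
  rw [Subalgebra.eq_of_le_of_finrank_le hle (hw2 ▸ Subalgebra.finrank_le_two _)]
  exact subset_adjoin (by simp)

theorem exists_mul_self_eq_neg_one_of_notMem_bot {x : D} (hx : x ∉ (⊥ : Subalgebra ℝ D)) :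
    ∃ i : D, i * i = -1 := by
  obtain ⟨e⟩ := (adjoin ℝ {x}).nonempty_algEquiv_complex_of_ne_bot
    fun h ↦ hx (h ▸ self_mem_adjoin_singleton ℝ x)
  refine ⟨e.symm Complex.I, ?_⟩
  rw [← Subalgebra.coe_mul, ← map_mul, Complex.I_mul_I, map_neg, map_one]
  rfl

theorem exists_mul_self_eq_neg_one_anticommute {i : D} (hi : i * i = -1)
    (hD : ∃ x y : D, ¬Commute x y) : ∃ j : D, j * j = -1 ∧ i * j = -(j * i) := by
  have hi0 : i ≠ 0 := by rintro rfl; simp at hi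
  obtain ⟨m, hm0, hm⟩ : ∃ m : D, m ≠ 0 ∧ i * m = -(m * i) := by
    by_contra! h
    have hmem (z : D) : z ∈ adjoin ℝ {i} := by
      obtain ⟨p, m, rfl, hp, hm⟩ := exists_eq_add_commute_anticommute hi z
      obtain rfl : m = 0 := by_contra fun hm0 ↦ h m hm0 hm
      rw [add_zero]
      exact mem_adjoin_singleton_of_commute (notMem_bot_of_mul_self_eq_neg_one hi) hp
    obtain ⟨x, y, hxy⟩ := hD
    exact hxy (commute_of_mem_adjoin_singleton_of_commute (hmem y)
      (commute_of_mem_adjoin_self (hmem x)).symm)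
  have hm2 : m * m ∈ (⊥ : Subalgebra ℝ D) := by
    by_contra h
    have hm_mem := mem_adjoin_singleton_of_commute h ((Commute.refl m).mul_left (.refl m))
    exact hm0 (eq_zero_of_commute_of_mul_eq_neg hi0
      (commute_of_mem_adjoin_singleton_of_commute hm_mem (commute_mul_of_anticommute hm hm)) hm)
  have hm_bot : m ∉ (⊥ : Subalgebra ℝ D) := by
    rintro hm'
    obtain ⟨r, rfl⟩ := Algebra.mem_bot.mp hm'
    exact hm0 (eq_zero_of_commute_of_mul_eq_neg hi0 (commute_algebraMap_right r i) hm)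
  obtain ⟨c, hc⟩ := exists_smul_mul_self_eq_neg_one hm_bot hm2
  exact ⟨c • m, hc, by rw [mul_smul_comm, smul_mul_assoc, hm, smul_neg]⟩

theorem QuaternionAlgebra.Basis.liftHom_surjective
    (Q : QuaternionAlgebra.Basis D (-1 : ℝ) 0 (-1)) : Function.Surjective Q.liftHom := by
  have hi : Q.i * Q.i = -1 := by simp [Q.i_mul_i]
  have hj : Q.j * Q.j = -1 := by simp [Q.j_mul_j]
  have hij : Q.i * Q.j = -(Q.j * Q.i) := by simp [Q.j_mul_i, Q.i_mul_j]
  have hcent {x : D} (hx : Commute Q.i x) : x ∈ Q.liftHom.range := by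
    rw [range_liftHom]
    exact adjoin_mono (by simp)
      (mem_adjoin_singleton_of_commute (notMem_bot_of_mul_self_eq_neg_one hi) hx)
  have hj_mem : Q.j ∈ Q.liftHom.range := by
    rw [range_liftHom]
    exact subset_adjoin (by simp)
  intro y
  obtain ⟨p, m, rfl, hp, hm⟩ := exists_eq_add_commute_anticommute hi y
  have hm' : m = -(m * Q.j * Q.j) := by rw [mul_assoc, hj, mul_neg_one, neg_neg]
  rw [← AlgHom.mem_range, hm']
  exact add_mem (hcent hp) (neg_mem (mul_mem (hcent (commute_mul_of_anticommute hm hij)) hj_mem))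

end DivisionRing

/-- (Frobenius) Every finite-dimensional associative unital division algebra
over `ℝ` is isomorphic as an `ℝ`-algebra to `ℝ`, `ℂ`, or the quaternions `ℍ`. -/
theorem frobenius_division_algebras
    (D : Type*) [DivisionRing D] [Algebra ℝ D] [FiniteDimensional ℝ D] :
    Nonempty (D ≃ₐ[ℝ] ℝ) ∨ Nonempty (D ≃ₐ[ℝ] ℂ) ∨ Nonempty (D ≃ₐ[ℝ] ℍ[ℝ]) := by
  by_cases hD : ∀ x y : D, Commute x y
  · let : Field D := { ‹DivisionRing D› with mul_comm := fun x y ↦ (hD x y).eq }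
    exact (Real.nonempty_algEquiv_or D).imp_right .inl
  push Not at hD
  obtain ⟨x, y, hxy⟩ := hD
  have hx : x ∉ (⊥ : Subalgebra ℝ D) := fun hx ↦ by
    obtain ⟨r, rfl⟩ := Algebra.mem_bot.mp hx
    exact hxy (commute_algebraMap_left r y)
  obtain ⟨i, hi⟩ := exists_mul_self_eq_neg_one_of_notMem_bot hx
  obtain ⟨j, hj, hij⟩ := exists_mul_self_eq_neg_one_anticommute hi ⟨x, y, hxy⟩
  let Q := QuaternionAlgebra.Basis.ofAnticommute (R := ℝ) hi hj hij
  let f : ℍ[ℝ] →ₐ[ℝ] D := Q.liftHom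
  exact .inr <| .inr ⟨(AlgEquiv.ofBijective f ⟨f.injective, Q.liftHom_surjective⟩).symm⟩
end

section
/- Let k be a field complete with respect to a nontrivial absolute value |·|, and let L/k be a finite field extension with n = [L:k]. If |·| extends to an absolute value on L, then this extension is unique, it is given by the formula |a| = |N_{L/k}(a)|^{1/n} for all a ∈ L, and L is complete with respect to it. -/
/-- A sequence is Cauchy with respect to an absolute value. -/
def IsCauchyWrt {K : Type*} [Field K] (v : AbsoluteValue K ℝ) (s : ℕ → K) : Prop :=
  ∀ ε : ℝ, 0 < ε → ∃ N : ℕ, ∀ m n : ℕ, N ≤ m → N ≤ n → v (s m - s n) < ε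

/-- A sequence converges to a limit with respect to an absolute value. -/
def TendsToWrt {K : Type*} [Field K] (v : AbsoluteValue K ℝ) (s : ℕ → K) (x : K) : Prop :=
  ∀ ε : ℝ, 0 < ε → ∃ N : ℕ, ∀ m : ℕ, N ≤ m → v (s m - x) < ε

/-!
An extension `w` makes `L` a finite-dimensional normed space over the complete field `k`, so
`L` is complete and every `k`-linear map out of `L` is continuous. In particular the entries of
the matrix of multiplication by `x` are `O(w x)`, hence `v (N x) ≤ D * w x ^ n` for a constant
`D`. Applying this to `x ^ m` and taking `m`-th roots removes `D`, and applying it to `x⁻¹` gives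
the reverse inequality, so `w x ^ n = v (N x)`. This formula does not depend on `w`, which gives
uniqueness.
-/

open Module

theorem le_of_forall_pow_le_mul_pow {α : Type*} [Field α] [LinearOrder α] [IsStrictOrderedRing α]
    [Archimedean α] {a b D : α} (hb : 0 ≤ b) (h : ∀ m : ℕ, a ^ m ≤ D * b ^ m) : a ≤ b := by
  by_contra! hba
  rcases hb.eq_or_lt with rfl | hb
  · exact (h 1).not_gt (by simpa using hba)
  obtain ⟨m, hm⟩ := pow_unbounded_of_one_lt D ((one_lt_div hb).2 hba)
  rw [div_pow, lt_div_iff₀ (pow_pos hb m)] at hm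
  exact (h m).not_gt hm

section NormedAlgebra

variable {k L : Type*} [NontriviallyNormedField k] [CompleteSpace k]

theorem exists_norm_algebraNorm_le_mul_pow [NormedRing L] [NormedAlgebra k L]
    [FiniteDimensional k L] : ∃ D : ℝ, ∀ x : L, ‖Algebra.norm k x‖ ≤ D * ‖x‖ ^ finrank k L := by
  set n := finrank k L
  let b := finBasis k L
  let Φ : L →L[k] (Fin n → Fin n → k) := LinearMap.toContinuousLinearMap
    ((Matrix.ofLinearEquiv k).symm.toLinearMap ∘ₗ (Algebra.leftMulMatrix b).toLinearMap)
  refine ⟨n.factorial * ‖Φ‖ ^ n, fun x => ?_⟩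
  have hentry (i j : Fin n) : ‖Algebra.leftMulMatrix b x i j‖ ≤ ‖Φ‖ * ‖x‖ :=
    calc ‖Φ x i j‖ ≤ ‖Φ x‖ := (norm_le_pi_norm (Φ x i) j).trans (norm_le_pi_norm (Φ x) i)
      _ ≤ ‖Φ‖ * ‖x‖ := Φ.le_opNorm x
  calc ‖Algebra.norm k x‖
      = IsAbsoluteValue.toAbsoluteValue norm (Algebra.leftMulMatrix b x).det := by
        rw [Algebra.norm_eq_matrix_det b]; rfl
    _ ≤ n.factorial • (‖Φ‖ * ‖x‖) ^ n := by
        simpa using Matrix.det_le (abv := IsAbsoluteValue.toAbsoluteValue norm) hentry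
    _ = n.factorial * ‖Φ‖ ^ n * ‖x‖ ^ n := by rw [nsmul_eq_mul, mul_pow, mul_assoc]

variable [NormedDivisionRing L] [NormedAlgebra k L] [FiniteDimensional k L]

theorem norm_algebraNorm_le_norm_pow (x : L) : ‖Algebra.norm k x‖ ≤ ‖x‖ ^ finrank k L := by
  obtain ⟨D, hD⟩ := exists_norm_algebraNorm_le_mul_pow (k := k) (L := L)
  refine le_of_forall_pow_le_mul_pow (D := D) (by positivity) fun m => ?_
  calc ‖Algebra.norm k x‖ ^ m = ‖Algebra.norm k (x ^ m)‖ := by rw [map_pow, norm_pow]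
    _ ≤ D * ‖x ^ m‖ ^ finrank k L := hD _
    _ = D * (‖x‖ ^ finrank k L) ^ m := by rw [norm_pow, ← pow_mul, ← pow_mul, mul_comm m]

theorem norm_pow_finrank_eq_norm_algebraNorm (x : L) :
    ‖x‖ ^ finrank k L = ‖Algebra.norm k x‖ := by
  rcases eq_or_ne x 0 with rfl | hx
  · rw [norm_zero, zero_pow finrank_pos.ne', Algebra.norm_zero, norm_zero]
  refine le_antisymm ?_ (norm_algebraNorm_le_norm_pow x)
  have hinv := norm_algebraNorm_le_norm_pow (k := k) x⁻¹
  rw [Algebra.norm_inv, norm_inv, norm_inv, inv_pow] at hinv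
  exact (inv_le_inv₀ (norm_pos_iff.2 (Algebra.norm_ne_zero_iff.2 hx)) (by positivity)).1 hinv

end NormedAlgebra

namespace AbsoluteValue

section Completeness

variable {K : Type*} [Field K] (v : AbsoluteValue K ℝ)

theorem cauchySeq_iff_isCauchyWrt (s : ℕ → K) :
    letI := v.toNormedField; CauchySeq s ↔ IsCauchyWrt v s := by
  let := v.toNormedField
  simp only [Metric.cauchySeq_iff, dist_eq_norm, IsCauchyWrt, ge_iff_le]
  exact forall₂_congr fun ε _ => exists_congr fun N =>
    ⟨fun h m n hm hn => h m hm n hn, fun h m hm n hn => h m n hm hn⟩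

theorem tendsto_iff_tendsToWrt (s : ℕ → K) (x : K) :
    letI := v.toNormedField; Filter.Tendsto s Filter.atTop (nhds x) ↔ TendsToWrt v s x := by
  let := v.toNormedField
  simp only [Metric.tendsto_atTop, dist_eq_norm, TendsToWrt, ge_iff_le]
  rfl

theorem completeSpace_iff :
    letI := v.toNormedField
    CompleteSpace K ↔ ∀ s : ℕ → K, IsCauchyWrt v s → ∃ x : K, TendsToWrt v s x := by
  let := v.toNormedField
  simp only [← cauchySeq_iff_isCauchyWrt, ← tendsto_iff_tendsToWrt]
  exact ⟨fun _ _ => cauchySeq_tendsto_of_complete, Metric.complete_of_cauchySeq_tendsto⟩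

end Completeness

variable {k L : Type*} [NontriviallyNormedField k] [Field L] [Algebra k L]
  (w : AbsoluteValue L ℝ)

@[reducible]
noncomputable def toNormedAlgebra (hext : ∀ a : k, w (algebraMap k L a) = ‖a‖) :
    letI := w.toNormedField; NormedAlgebra k L :=
  letI := w.toNormedField
  { norm_smul_le a x := by
      rw [Algebra.smul_def]; exact (w.map_mul _ x).trans_le (by rw [hext]; rfl) }

variable [CompleteSpace k] [FiniteDimensional k L]

theorem pow_finrank_eq_norm_algebraNorm (hext : ∀ a : k, w (algebraMap k L a) = ‖a‖) (x : L) :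
    w x ^ finrank k L = ‖Algebra.norm k x‖ :=
  letI := w.toNormedField
  letI := w.toNormedAlgebra hext
  norm_pow_finrank_eq_norm_algebraNorm x

theorem completeSpace_of_extends (hext : ∀ a : k, w (algebraMap k L a) = ‖a‖) :
    letI := w.toNormedField; CompleteSpace L :=
  letI := w.toNormedField
  letI := w.toNormedAlgebra hext
  FiniteDimensional.complete k L

end AbsoluteValue

/-- Let `k` be complete with respect to a nontrivial absolute value `v` and let `L/k` be
a finite extension of degree `n`. If `v` extends to an absolute value `w` on `L`, then
`w` is given by `w a = v(N_{L/k}(a))^(1/n)`, the extension is unique, and `L` is complete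
with respect to it. -/
theorem unique_absolute_value_extension
    (k : Type*) [Field k] (v : AbsoluteValue k ℝ)
    (hnt : ∃ a : k, a ≠ 0 ∧ v a ≠ 1)
    (hcomplete : ∀ s : ℕ → k, IsCauchyWrt v s → ∃ x : k, TendsToWrt v s x)
    (L : Type*) [Field L] [Algebra k L] [FiniteDimensional k L]
    (w : AbsoluteValue L ℝ) (hext : ∀ a : k, w (algebraMap k L a) = v a) :
    (∀ a : L, w a = v (Algebra.norm k a) ^ (1 / (Module.finrank k L : ℝ))) ∧
    (∀ w' : AbsoluteValue L ℝ, (∀ a : k, w' (algebraMap k L a) = v a) → w' = w) ∧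
    (∀ s : ℕ → L, IsCauchyWrt w s → ∃ x : L, TendsToWrt w s x) := by
  let := v.toNormedField
  let := NontriviallyNormedField.ofNormNeOne hnt
  have := v.completeSpace_iff.2 hcomplete
  have formula (w' : AbsoluteValue L ℝ) (hw' : ∀ a : k, w' (algebraMap k L a) = v a) (a : L) :
      w' a = v (Algebra.norm k a) ^ (1 / (finrank k L : ℝ)) := by
    have hpow : w' a ^ finrank k L = v (Algebra.norm k a) :=
      w'.pow_finrank_eq_norm_algebraNorm hw' a
    rw [← hpow, one_div, Real.pow_rpow_inv_natCast (w'.nonneg a) finrank_pos.ne']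
  refine ⟨formula w hext, fun w' hw' => AbsoluteValue.ext fun a => by rw [formula w' hw', formula w hext], ?_⟩
  exact w.completeSpace_iff.1 (w.completeSpace_of_extends hext)
end

section
/- Let 𝔽_q ⊆ 𝔽_{q^n} be an extension of finite fields. Then every a ∈ 𝔽_qˣ is the norm N_{𝔽_{q^n}/𝔽_q}(b) of some element b ∈ 𝔽_{q^n} that is not contained in any proper subfield of 𝔽_{q^n} containing 𝔽_q (equivalently, 𝔽_q(b) = 𝔽_{q^n}). -/
/-!
The norm `𝔽_{q^n}ˣ → 𝔽_qˣ` is a surjective group homomorphism, so each fibre over a nonzero `a`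
is a coset of its kernel and has `(q^n - 1)/(q - 1) = 1 + q + ⋯ + q^(n-1)` elements. An element
`b` with `𝔽_q(b) ≠ 𝔽_{q^n}` lies in a subfield `𝔽_{q^d}` with `1 ≤ d < n`, hence is a root of
`X^(q^d) - X`; there are at most `q + q^2 + ⋯ + q^(n-1)` such elements, fewer than the size of
any fibre.
-/

open Polynomial Finset Module IntermediateField

theorem MonoidHom.card_ker_mul_card_of_surjective {G H : Type*} [Group G] [Group H] {f : G →* H}
    (hf : Function.Surjective f) : Nat.card f.ker * Nat.card H = Nat.card G := by
  rw [← f.ker.card_mul_index, Subgroup.index_ker, f.range_eq_top.mpr hf, Subgroup.card_top]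

theorem ncard_setOf_pow_eq_self_le {F : Type*} [Field F] {m : ℕ} (hm : 1 < m) :
    {x : F | x ^ m = x}.ncard ≤ m := by
  classical
  have hne : (X ^ m - X : F[X]) ≠ 0 := FiniteField.X_pow_card_sub_X_ne_zero F hm
  have hroots : {x : F | x ^ m = x} = ((X ^ m - X : F[X]).roots.toFinset : Set F) := by
    ext x
    simp [mem_roots hne, sub_eq_zero]
  rw [hroots, Set.ncard_coe_finset]
  exact (Multiset.toFinset_card_le _).trans
    ((card_roots' _).trans (FiniteField.X_pow_card_sub_X_natDegree_eq F hm).le)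

theorem IntermediateField.finrank_lt_of_ne_top {K L : Type*} [Field K] [Field L] [Algebra K L]
    [FiniteDimensional K L] {F : IntermediateField K L} (hF : F ≠ ⊤) :
    finrank K F < finrank K L := by
  rw [← finrank_eq_finrank_subalgebra, ← Subalgebra.finrank_toSubmodule]
  exact Submodule.finrank_lt
    (by rwa [Ne, Algebra.toSubmodule_eq_top, ← top_toSubalgebra, toSubalgebra_inj])

namespace FiniteField

variable (K L : Type*) [Field K] [Field L] [Algebra K L] [Finite L]

theorem ncard_norm_fiber {a : K} (ha : a ≠ 0) :
    {b : L | Algebra.norm K b = a}.ncard = (Nat.card L - 1) / (Nat.card K - 1) := by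
  have := Finite.of_injective _ (algebraMap K L).injective
  have hN := unitsMap_norm_surjective K L
  have hfiber : {b : L | Algebra.norm K b = a} =
      Units.val '' (Units.map (Algebra.norm K) ⁻¹' {Units.mk0 a ha}) := by
    ext b
    constructor
    · intro hb
      have hb0 : b ≠ 0 := by rintro rfl; exact ha (by simpa using hb.symm)
      exact ⟨Units.mk0 b hb0, by simpa [Units.ext_iff] using hb, rfl⟩
    · rintro ⟨u, hu, rfl⟩
      simpa [Units.ext_iff] using hu
  rw [hfiber, Set.ncard_image_of_injective _ Units.val_injective, ← Nat.card_coe_set_eq,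
    Nat.card_congr (MonoidHom.fiberEquivKerOfSurjective hN _), ← Nat.card_units, ← Nat.card_units,
    ← MonoidHom.card_ker_mul_card_of_surjective hN, Nat.mul_div_cancel _ Nat.card_pos]

theorem pow_card_pow_finrank_eq_self {F : IntermediateField K L} {x : L} (hx : x ∈ F) :
    x ^ Nat.card K ^ finrank K F = x := by
  have := Finite.of_injective _ (algebraMap K L).injective
  have := Fintype.ofFinite F
  rw [← Module.natCard_eq_pow_finrank, Nat.card_eq_fintype_card]
  exact congrArg Subtype.val (pow_card (⟨x, hx⟩ : F))

theorem setOf_adjoin_ne_top_subset :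
    {b : L | K⟮b⟯ ≠ ⊤} ⊆ ⋃ d ∈ Ico 1 (finrank K L), {x : L | x ^ Nat.card K ^ d = x} := by
  intro b hb
  simp only [Set.mem_iUnion, Set.mem_ofPred_eq, Finset.mem_Ico, exists_prop]
  exact ⟨finrank K K⟮b⟯, ⟨finrank_pos, finrank_lt_of_ne_top hb⟩,
    pow_card_pow_finrank_eq_self K L (mem_adjoin_simple_self K b)⟩

theorem ncard_setOf_adjoin_ne_top_lt :
    {b : L | K⟮b⟯ ≠ ⊤}.ncard < (Nat.card L - 1) / (Nat.card K - 1) := by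
  have := Finite.of_injective _ (algebraMap K L).injective
  have hq : 1 < Nat.card K := Finite.one_lt_card
  have hn : 0 < finrank K L := finrank_pos
  calc {b : L | K⟮b⟯ ≠ ⊤}.ncard
      ≤ (⋃ d ∈ Ico 1 (finrank K L), {x : L | x ^ Nat.card K ^ d = x}).ncard :=
        Set.ncard_le_ncard (setOf_adjoin_ne_top_subset K L)
    _ ≤ ∑ d ∈ Ico 1 (finrank K L), Nat.card K ^ d :=
        (set_ncard_biUnion_le _ _).trans <| sum_le_sum fun d hd =>
          ncard_setOf_pow_eq_self_le (Nat.one_lt_pow (by simp at hd; omega) hq)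
    _ < ∑ d ∈ range (finrank K L), Nat.card K ^ d := by
        rw [range_eq_Ico, sum_eq_sum_Ico_succ_bot hn]
        simp
    _ = (Nat.card L - 1) / (Nat.card K - 1) := by
        rw [Nat.geomSum_eq hq, Module.natCard_eq_pow_finrank (K := K) (V := L)]

end FiniteField

/-- For an extension of finite fields `𝔽_q ⊆ 𝔽_{q^n}`, every nonzero `a ∈ 𝔽_q` is the
norm of some `b ∈ 𝔽_{q^n}` that lies in no proper subfield containing `𝔽_q`,
i.e. with `𝔽_q(b) = 𝔽_{q^n}`. -/
theorem finite_field_norm_of_generator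
    (K L : Type*) [Field K] [Field L] [Algebra K L] [Finite L] :
    ∀ a : K, a ≠ 0 → ∃ b : L,
      IntermediateField.adjoin K {b} = ⊤ ∧ Algebra.norm K b = a := by
  intro a ha
  have hcard : {b : L | K⟮b⟯ ≠ ⊤}.ncard < {b : L | Algebra.norm K b = a}.ncard := by
    rw [FiniteField.ncard_norm_fiber K L ha]
    exact FiniteField.ncard_setOf_adjoin_ne_top_lt K L
  obtain ⟨b, hnorm, hgen⟩ := Set.exists_mem_notMem_of_ncard_lt_ncard hcard
  exact ⟨b, not_not.mp hgen, hnorm⟩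
end
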